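/- Let P = (1/100)·P₁ + (99/100)·P₂ where P₁ is uniform on [0,1/3] and P₂ is uniform on [2/3,1]. For any n ≥ 3, every optimal set γ_n of n-means satisfies γ_n ∩ [0,1/3] ≠ ∅ and γ_n ∩ [2/3,1] ≠ ∅. -/

import Mathlib

open MeasureTheory Set

noncomputable def unif (a b : ℝ) : Measure ℝ :=
  (ENNReal.ofReal (b - a))⁻¹ • (volume.restrict (Icc a b))

noncomputable def mix (p : ℝ) (P₁ P₂ : Measure ℝ) : Measure ℝ :=
  ENNReal.ofReal p • P₁ + ENNReal.ofReal (1 - p) • P₂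

noncomputable def distortion (P : Measure ℝ) (γ : Finset ℝ) : ℝ :=
  ∫ x, sInf ((fun c => (x - c) ^ 2) '' (γ : Set ℝ)) ∂P

noncomputable def quantErr (P : Measure ℝ) (n : ℕ) : ℝ :=
  sInf { v | ∃ γ : Finset ℝ, γ.Nonempty ∧ γ.card ≤ n ∧ v = distortion P γ }

def IsOptimal (P : Measure ℝ) (n : ℕ) (γ : Finset ℝ) : Prop :=
  γ.Nonempty ∧ γ.card ≤ n ∧ distortion P γ = quantErr P n

/-!
Each case is settled by a competitor with at most as many points as `γ` and strictly smaller
distortion. The set `{1/6, 3/4, 11/12}` has distortion at most `1/400`, whereas a set missing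
`[2/3, 1]` pays at least `11/1200` on the component over `[2/3, 1]`, and a set inside `[2/3, ∞)`
pays at least `7/2700` on the component over `[0, 1/3]`.

Moving a negative point to `0` increases no distance on `[0, ∞)` and decreases it near `0`, so an
optimal set with a negative point contains `0`. Hence it remains to exclude that all points of `γ`
exceed `1/3`. Adding any point of `[0, 1/3]` would help, so
`γ` has exactly `n ≥ 3` points; let `c₀ < c₁` be the two smallest and `m` their midpoint. If
`m ≤ 2/3`, moving `c₀` to `1/6` helps; if `m ≥ 1`, moving `c₁` to `1/6` helps. Otherwise the cell of
`c₀` is `[0, 1/3] ∪ [2/3, m]`, optimality forces `c₀` to be the `P`-mean of this cell, and that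
centroid condition makes it strictly cheaper to move `c₀` to `1/6` and let `c₁` serve `[2/3, m]`.
-/

noncomputable def minSqDist (γ : Finset ℝ) (x : ℝ) : ℝ :=
  sInf ((fun c => (x - c) ^ 2) '' (γ : Set ℝ))

section minSqDist

variable {γ γ' : Finset ℝ} {a b c d x : ℝ}

theorem minSqDist_eq_inf' (hγ : γ.Nonempty) (x : ℝ) :
    minSqDist γ x = γ.inf' hγ (fun c => (x - c) ^ 2) := by
  rw [Finset.inf'_eq_csInf_image, minSqDist]

theorem minSqDist_le (hc : c ∈ γ) (x : ℝ) : minSqDist γ x ≤ (x - c) ^ 2 := by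
  rw [minSqDist_eq_inf' ⟨c, hc⟩]
  exact Finset.inf'_le _ hc

theorem le_minSqDist (hγ : γ.Nonempty) (h : ∀ c ∈ γ, b ≤ (x - c) ^ 2) :
    b ≤ minSqDist γ x := by
  rw [minSqDist_eq_inf' hγ]
  exact Finset.le_inf' _ _ h

theorem minSqDist_nonneg (γ : Finset ℝ) (x : ℝ) : 0 ≤ minSqDist γ x :=
  Real.sInf_nonneg (by rintro _ ⟨c, -, rfl⟩; positivity)

theorem minSqDist_pos (hγ : γ.Nonempty) (hx : x ∉ γ) : 0 < minSqDist γ x := by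
  rw [minSqDist_eq_inf' hγ, Finset.lt_inf'_iff]
  intro c hc
  have : x - c ≠ 0 := sub_ne_zero.2 fun h => hx (h ▸ hc)
  positivity

theorem minSqDist_anti (hγ : γ.Nonempty) (h : γ ⊆ γ') (x : ℝ) :
    minSqDist γ' x ≤ minSqDist γ x :=
  le_minSqDist hγ fun _ hc => minSqDist_le (h hc) x

theorem minSqDist_insert_erase_le (hc : c ∈ γ) (h : (x - a) ^ 2 ≤ (x - c) ^ 2) :
    minSqDist (insert a (γ.erase c)) x ≤ minSqDist γ x := by
  obtain ⟨d, hd, hmin⟩ := Finset.exists_mem_eq_inf' ⟨c, hc⟩ fun e => (x - e) ^ 2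
  rw [minSqDist_eq_inf' ⟨c, hc⟩, hmin]
  rcases eq_or_ne d c with rfl | hdc
  · exact (minSqDist_le (Finset.mem_insert_self _ _) x).trans h
  · exact minSqDist_le (Finset.mem_insert_of_mem (Finset.mem_erase.2 ⟨hdc, hd⟩)) x

theorem continuous_minSqDist (hγ : γ.Nonempty) : Continuous (minSqDist γ) := by
  simp_rw [funext (minSqDist_eq_inf' hγ)]
  exact Continuous.finset_inf'_apply hγ fun c _ => by fun_prop

theorem sq_sub_le_sq_sub_of_two_mul_le (hcd : c ≤ d) (hx : 2 * x ≤ c + d) :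
    (x - c) ^ 2 ≤ (x - d) ^ 2 := by
  nlinarith

theorem sq_sub_le_sq_sub_of_le_two_mul (hcd : c ≤ d) (hx : c + d ≤ 2 * x) :
    (x - d) ^ 2 ≤ (x - c) ^ 2 := by
  nlinarith

theorem minSqDist_eq_of_two_mul_le {c₀ c₁ : ℝ} (hc₀ : c₀ ∈ γ) (h01 : c₀ ≤ c₁)
    (hrest : ∀ d ∈ γ.erase c₀, c₁ ≤ d) (hx : 2 * x ≤ c₀ + c₁) :
    minSqDist γ x = (x - c₀) ^ 2 := by
  refine (minSqDist_le hc₀ x).antisymm (le_minSqDist ⟨c₀, hc₀⟩ fun d hd => ?_)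
  rcases eq_or_ne d c₀ with rfl | hne
  · exact le_rfl
  · have hd₁ := hrest d (Finset.mem_erase.2 ⟨hne, hd⟩)
    exact sq_sub_le_sq_sub_of_two_mul_le (h01.trans hd₁) (by linarith)

theorem minSqDist_eq_erase_of_le_two_mul {c₀ c₁ : ℝ} (hc₀ : c₀ ∈ γ) (hc₁ : c₁ ∈ γ.erase c₀)
    (h01 : c₀ ≤ c₁) (hx : c₀ + c₁ ≤ 2 * x) :
    minSqDist γ x = minSqDist (γ.erase c₀) x := by
  refine (minSqDist_anti ⟨c₁, hc₁⟩ (Finset.erase_subset _ _) x).antisymm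
    (le_minSqDist ⟨c₀, hc₀⟩ fun d hd => ?_)
  rcases eq_or_ne d c₀ with rfl | hne
  · exact (minSqDist_le hc₁ x).trans (sq_sub_le_sq_sub_of_le_two_mul h01 hx)
  · exact minSqDist_le (Finset.mem_erase.2 ⟨hne, hd⟩) x

theorem integral_sq_sub (a b c : ℝ) :
    ∫ x in a..b, (x - c) ^ 2 = ((b - c) ^ 3 - (a - c) ^ 3) / 3 := by
  rw [intervalIntegral.integral_comp_sub_right (· ^ 2), integral_pow]
  norm_num

theorem integral_minSqDist_le (hab : a ≤ b) (hc : c ∈ γ) :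
    ∫ x in a..b, minSqDist γ x ≤ ∫ x in a..b, (x - c) ^ 2 :=
  intervalIntegral.integral_mono_on hab ((continuous_minSqDist ⟨c, hc⟩).intervalIntegrable _ _)
    ((by fun_prop : Continuous fun x : ℝ => (x - c) ^ 2).intervalIntegrable _ _)
    fun x _ => minSqDist_le hc x

theorem le_integral_minSqDist (hab : a ≤ b) (hγ : γ.Nonempty)
    (h : ∀ x ∈ Icc a b, ∀ d ∈ γ, (x - c) ^ 2 ≤ (x - d) ^ 2) :
    ∫ x in a..b, (x - c) ^ 2 ≤ ∫ x in a..b, minSqDist γ x :=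
  intervalIntegral.integral_mono_on hab
    ((by fun_prop : Continuous fun x : ℝ => (x - c) ^ 2).intervalIntegrable _ _)
    ((continuous_minSqDist hγ).intervalIntegrable _ _) fun x hx => le_minSqDist hγ (h x hx)

theorem integral_minSqDist_split (hγ : γ.Nonempty) (a b c : ℝ) :
    ∫ x in a..c, minSqDist γ x = (∫ x in a..b, minSqDist γ x) + ∫ x in b..c, minSqDist γ x :=
  (intervalIntegral.integral_add_adjacent_intervals (μ := volume)
    ((continuous_minSqDist hγ).intervalIntegrable _ _)
    ((continuous_minSqDist hγ).intervalIntegrable _ _)).symm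

end minSqDist

theorem Finset.card_insert_erase_le {α : Type*} [DecidableEq α] {s : Finset α} {a b : α}
    (hb : b ∈ s) : (insert a (s.erase b)).card ≤ s.card :=
  (Finset.card_insert_le _ _).trans (Finset.card_erase_add_one hb).le

theorem distortion_eq_integral (μ : Measure ℝ) (γ : Finset ℝ) :
    distortion μ γ = ∫ x, minSqDist γ x ∂μ :=
  rfl

theorem distortion_nonneg (μ : Measure ℝ) (γ : Finset ℝ) : 0 ≤ distortion μ γ :=
  integral_nonneg (minSqDist_nonneg γ)

theorem IsOptimal.distortion_le {μ : Measure ℝ} {n : ℕ} {γ : Finset ℝ} (hγ : IsOptimal μ n γ)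
    {γ' : Finset ℝ} (hne : γ'.Nonempty) (hcard : γ'.card ≤ n) :
    distortion μ γ ≤ distortion μ γ' :=
  hγ.2.2 ▸ csInf_le ⟨0, by rintro _ ⟨δ, -, -, rfl⟩; exact distortion_nonneg μ δ⟩
    ⟨γ', hne, hcard, rfl⟩

theorem IsOptimal.not_distortion_lt {μ : Measure ℝ} {n : ℕ} {γ : Finset ℝ} (hγ : IsOptimal μ n γ)
    {γ' : Finset ℝ} (hne : γ'.Nonempty) (hcard : γ'.card ≤ n) :
    ¬distortion μ γ' < distortion μ γ :=
  not_lt.2 (hγ.distortion_le hne hcard)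

theorem integral_unif {a b : ℝ} (hab : a < b) (g : ℝ → ℝ) :
    ∫ x, g x ∂unif a b = (b - a)⁻¹ * ∫ x in a..b, g x := by
  rw [unif, integral_smul_measure, ENNReal.toReal_inv, ENNReal.toReal_ofReal (by linarith),
    integral_Icc_eq_integral_Ioc, ← intervalIntegral.integral_of_le hab.le, smul_eq_mul]

theorem integrable_unif {a b : ℝ} (hab : a < b) {g : ℝ → ℝ} (hg : Continuous g) :
    Integrable g (unif a b) :=
  hg.integrableOn_Icc.smul_measure (by simpa using hab)

theorem integral_mix_unif {p a b c d : ℝ} (hp₀ : 0 ≤ p) (hp₁ : p ≤ 1) (hab : a < b) (hcd : c < d)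
    {g : ℝ → ℝ} (hg : Continuous g) :
    ∫ x, g x ∂mix p (unif a b) (unif c d) =
      p / (b - a) * (∫ x in a..b, g x) + (1 - p) / (d - c) * ∫ x in c..d, g x := by
  rw [mix, integral_add_measure ((integrable_unif hab hg).smul_measure ENNReal.ofReal_ne_top)
      ((integrable_unif hcd hg).smul_measure ENNReal.ofReal_ne_top),
    integral_smul_measure, integral_smul_measure, integral_unif hab, integral_unif hcd,
    ENNReal.toReal_ofReal hp₀, ENNReal.toReal_ofReal (by linarith), smul_eq_mul, smul_eq_mul]
  ring

noncomputable abbrev P : Measure ℝ := mix (1/100) (unif 0 (1/3)) (unif (2/3) 1)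

section P

variable {n : ℕ} {γ γ' : Finset ℝ}

theorem distortion_P (hγ : γ.Nonempty) :
    distortion P γ = 3/100 * (∫ x in (0:ℝ)..1/3, minSqDist γ x)
      + 297/100 * ∫ x in (2/3:ℝ)..1, minSqDist γ x := by
  rw [distortion_eq_integral, integral_mix_unif (by norm_num) (by norm_num) (by norm_num)
    (by norm_num) (continuous_minSqDist hγ)]
  norm_num

theorem distortion_P_lt (hγ : γ.Nonempty) (hγ' : γ'.Nonempty)
    (h₁ : ∫ x in (0:ℝ)..1/3, minSqDist γ' x < ∫ x in (0:ℝ)..1/3, minSqDist γ x)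
    (h₂ : ∀ x ∈ Icc (2/3:ℝ) 1, minSqDist γ' x ≤ minSqDist γ x) :
    distortion P γ' < distortion P γ := by
  have h₂' := intervalIntegral.integral_mono_on (μ := volume) (by norm_num)
    ((continuous_minSqDist hγ').intervalIntegrable _ _)
    ((continuous_minSqDist hγ).intervalIntegrable _ _) h₂
  rw [distortion_P hγ, distortion_P hγ']
  linarith

theorem distortion_P_lt_of_le_of_lt (hγ : γ.Nonempty) (hγ' : γ'.Nonempty)
    (h₁ : ∀ x ∈ Icc (0:ℝ) (1/3), minSqDist γ' x ≤ minSqDist γ x)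
    (h₂ : ∀ x ∈ Icc (2/3:ℝ) 1, minSqDist γ' x ≤ minSqDist γ x)
    (hlt : ∃ x ∈ Icc (0:ℝ) (1/3), minSqDist γ' x < minSqDist γ x) :
    distortion P γ' < distortion P γ :=
  distortion_P_lt hγ hγ' (intervalIntegral.integral_lt_integral_of_continuousOn_of_le_of_exists_lt
    (by norm_num) (continuous_minSqDist hγ').continuousOn (continuous_minSqDist hγ).continuousOn
    (fun x hx => h₁ x (Ioc_subset_Icc_self hx)) hlt) h₂

theorem IsOptimal.card_eq (hγ : IsOptimal P n γ) : γ.card = n := by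
  refine hγ.2.1.antisymm (not_lt.1 fun hlt => ?_)
  obtain ⟨x, hx, hxγ⟩ := (Icc_infinite (by norm_num : (0:ℝ) < 1/3)).exists_notMem_finset γ
  have hle : ∀ y, minSqDist (insert x γ) y ≤ minSqDist γ y :=
    minSqDist_anti hγ.1 (Finset.subset_insert _ _)
  have hx₀ : minSqDist (insert x γ) x < minSqDist γ x :=
    calc minSqDist (insert x γ) x ≤ (x - x) ^ 2 := minSqDist_le (Finset.mem_insert_self _ _) x
      _ = 0 := by ring
      _ < minSqDist γ x := minSqDist_pos hγ.1 hxγ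
  exact hγ.not_distortion_lt (Finset.insert_nonempty _ _) ((Finset.card_insert_le _ _).trans hlt)
    (distortion_P_lt_of_le_of_lt hγ.1 (Finset.insert_nonempty _ _) (fun y _ => hle y)
      (fun y _ => hle y) ⟨x, hx, hx₀⟩)

theorem IsOptimal.zero_mem_of_neg {c : ℝ} (hγ : IsOptimal P n γ) (hc : c ∈ γ) (hc₀ : c < 0) :
    (0:ℝ) ∈ γ := by
  by_contra h₀
  have hle : ∀ y : ℝ, 0 ≤ y → minSqDist (insert 0 (γ.erase c)) y ≤ minSqDist γ y :=
    fun y hy => minSqDist_insert_erase_le hc (sq_sub_le_sq_sub_of_le_two_mul hc₀.le (by linarith))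
  have hlt : minSqDist (insert 0 (γ.erase c)) 0 < minSqDist γ 0 :=
    calc minSqDist (insert 0 (γ.erase c)) 0 ≤ (0 - 0) ^ 2 :=
          minSqDist_le (Finset.mem_insert_self _ _) 0
      _ = 0 := by ring
      _ < minSqDist γ 0 := minSqDist_pos hγ.1 h₀
  exact hγ.not_distortion_lt (Finset.insert_nonempty _ _)
    ((Finset.card_insert_erase_le hc).trans hγ.2.1)
    (distortion_P_lt_of_le_of_lt hγ.1 (Finset.insert_nonempty _ _) (fun y hy => hle y hy.1)
      (fun y hy => hle y (by linarith [hy.1])) ⟨0, by norm_num, hlt⟩)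

theorem distortion_P_benchmark : distortion P {1/6, 3/4, 11/12} ≤ 1/400 := by
  have hne : ({1/6, 3/4, 11/12} : Finset ℝ).Nonempty := Finset.insert_nonempty _ _
  have h₁ := integral_minSqDist_le (a := 0) (b := 1/3) (by norm_num)
    (by simp : (1/6 : ℝ) ∈ ({1/6, 3/4, 11/12} : Finset ℝ))
  have h₂ := integral_minSqDist_le (a := 2/3) (b := 5/6) (by norm_num)
    (by simp : (3/4 : ℝ) ∈ ({1/6, 3/4, 11/12} : Finset ℝ))
  have h₃ := integral_minSqDist_le (a := 5/6) (b := 1) (by norm_num)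
    (by simp : (11/12 : ℝ) ∈ ({1/6, 3/4, 11/12} : Finset ℝ))
  rw [integral_sq_sub] at h₁ h₂ h₃
  rw [distortion_P hne, integral_minSqDist_split hne (2/3) (5/6) 1]
  norm_num at h₁ h₂ h₃ ⊢
  linarith

theorem IsOptimal.distortion_P_le (hn : 3 ≤ n) (hγ : IsOptimal P n γ) :
    distortion P γ ≤ 1/400 :=
  (hγ.distortion_le (Finset.insert_nonempty _ _) (Finset.card_le_three.trans hn)).trans
    distortion_P_benchmark

theorem IsOptimal.exists_mem_Icc_two_thirds_one (hn : 3 ≤ n) (hγ : IsOptimal P n γ) :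
    ∃ c ∈ γ, c ∈ Icc (2/3:ℝ) 1 := by
  by_contra! h
  simp only [mem_Icc, not_and, not_le] at h
  have h₁ := le_integral_minSqDist (a := 2/3) (b := 5/6) (c := 2/3) (by norm_num) hγ.1
    fun x hx d hd => by
      rcases lt_or_ge d (2/3) with hd' | hd'
      · exact sq_sub_le_sq_sub_of_le_two_mul hd'.le (by linarith [hx.1])
      · exact sq_sub_le_sq_sub_of_two_mul_le hd' (by linarith [hx.2, h d hd hd'])
  have h₂ := le_integral_minSqDist (a := 5/6) (b := 1) (c := 1) (by norm_num) hγ.1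
    fun x hx d hd => by
      rcases lt_or_ge d (2/3) with hd' | hd'
      · exact sq_sub_le_sq_sub_of_le_two_mul (by linarith) (by linarith [hx.1])
      · exact sq_sub_le_sq_sub_of_two_mul_le (h d hd hd').le (by linarith [hx.2, h d hd hd'])
  have h₀ : 0 ≤ ∫ x in (0:ℝ)..1/3, minSqDist γ x :=
    intervalIntegral.integral_nonneg (by norm_num) fun x _ => minSqDist_nonneg γ x
  rw [integral_sq_sub] at h₁ h₂
  have := hγ.distortion_P_le hn
  rw [distortion_P hγ.1, integral_minSqDist_split hγ.1 (2/3) (5/6) 1] at this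
  norm_num at h₁ h₂ this
  linarith

theorem not_isOptimal_of_forall_two_thirds_le (hn : 3 ≤ n) (h : ∀ d ∈ γ, 2/3 ≤ d) :
    ¬IsOptimal P n γ := by
  intro hγ
  have h₁ := le_integral_minSqDist (a := 0) (b := 1/3) (c := 2/3) (by norm_num) hγ.1
    fun x hx d hd => sq_sub_le_sq_sub_of_two_mul_le (h d hd) (by linarith [hx.2, h d hd])
  have h₂ : 0 ≤ ∫ x in (2/3:ℝ)..1, minSqDist γ x :=
    intervalIntegral.integral_nonneg (by norm_num) fun x _ => minSqDist_nonneg γ x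
  rw [integral_sq_sub] at h₁
  have := hγ.distortion_P_le hn
  rw [distortion_P hγ.1] at this
  norm_num at h₁ this
  linarith

theorem IsOptimal.exists_lt_of_one_sixth_mem {c : ℝ} (hγ : IsOptimal P n γ) (hc : c ≠ 1/6)
    (hleft : ∀ x ∈ Icc (0:ℝ) (1/3), minSqDist γ x = (x - c) ^ 2) (h' : 1/6 ∈ γ')
    (hcard : γ'.card ≤ n) :
    ∃ x ∈ Icc (2/3:ℝ) 1, minSqDist γ x < minSqDist γ' x := by
  by_contra! h
  refine hγ.not_distortion_lt ⟨_, h'⟩ hcard (distortion_P_lt hγ.1 ⟨_, h'⟩ ?_ h)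
  have hγc : ∫ x in (0:ℝ)..1/3, minSqDist γ x = ∫ x in (0:ℝ)..1/3, (x - c) ^ 2 :=
    intervalIntegral.integral_congr fun x hx => hleft x (by rwa [uIcc_of_le (by norm_num)] at hx)
  have hpos : 0 < (c - 1/6) ^ 2 := by positivity
  calc ∫ x in (0:ℝ)..1/3, minSqDist γ' x ≤ ∫ x in (0:ℝ)..1/3, (x - 1/6) ^ 2 :=
        integral_minSqDist_le (by norm_num) h'
    _ < ∫ x in (0:ℝ)..1/3, (x - c) ^ 2 := by
        rw [integral_sq_sub, integral_sq_sub]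
        linear_combination hpos / 3
    _ = _ := hγc.symm

noncomputable def splitCost (m a b : ℝ) : ℝ :=
  3/100 * (∫ x in (0:ℝ)..1/3, (x - a) ^ 2) + 297/100 * ∫ x in (2/3:ℝ)..m, (x - b) ^ 2

theorem splitCost_eq (m a b : ℝ) :
    splitCost m a b = ((a - 1/6) ^ 2 + 1/108) / 100 + 99/100 * ((m - b) ^ 3 - (2/3 - b) ^ 3) := by
  rw [splitCost, integral_sq_sub, integral_sq_sub]
  ring

theorem mul_eq_of_forall_quadratic_le {A B c : ℝ}
    (h : ∀ θ : ℝ, A * c ^ 2 - 2 * B * c ≤ A * θ ^ 2 - 2 * B * θ) : A * c = B := by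
  have hd := discrim_le_zero (a := A) (b := -2 * B) (c := -(A * c ^ 2 - 2 * B * c))
    fun θ => by linear_combination h θ
  have hsq : (A * c - B) ^ 2 = 0 := le_antisymm (by rw [discrim] at hd; linarith) (sq_nonneg _)
  exact sub_eq_zero.1 (pow_eq_zero_iff two_ne_zero |>.1 hsq)

/-- The first-order condition: `c` is the mean of `P` restricted to `[0, 1/3] ∪ [2/3, m]`. -/
theorem centroid_of_forall_splitCost_le {m c : ℝ} (h : ∀ θ, splitCost m c c ≤ splitCost m θ θ) :
    c - 1/6 = 297 * (m - 2/3) * ((2/3 + m) / 2 - c) := by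
  have hAB := mul_eq_of_forall_quadratic_le (A := 1/100 + 297/100 * (m - 2/3))
    (B := 1/600 + 297/200 * (m ^ 2 - 4/9)) (c := c) fun θ => by
      have := h θ
      rw [splitCost_eq, splitCost_eq] at this
      linear_combination this
  linear_combination 100 * hAB

theorem splitCost_one_sixth_lt {m c : ℝ} (hc : 1/3 < c) (hc' : c ≤ 2/3) (hm : 2/3 < m)
    (hcent : c - 1/6 = 297 * (m - 2/3) * ((2/3 + m) / 2 - c)) :
    splitCost m (1/6) (2 * m - c) < splitCost m c c := by
  obtain ⟨ℓ, rfl⟩ : ∃ ℓ, m = 2/3 + ℓ := ⟨m - 2/3, by ring⟩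
  obtain ⟨D, rfl⟩ : ∃ D, c = 2/3 + ℓ/2 - D := ⟨2/3 + ℓ/2 - c, by ring⟩
  have hℓ : 0 < ℓ := by linarith
  have hℓD : ℓ ≤ 2 * D := by linarith
  have hcent' : 1/2 + ℓ/2 - D = 297 * ℓ * D := by linear_combination hcent
  have hD : 0 < D := by nlinarith
  have hD' : 4 < 297 * D := by nlinarith
  have hkey : 0 < ℓ ^ 2 * (297 * D ^ 2 - 2 * D - ℓ) :=
    mul_pos (by positivity) (by nlinarith)
  rw [splitCost_eq, splitCost_eq]
  linear_combination 297/100 * hkey - (1/100) * (1/2 + ℓ/2 - D + 297 * ℓ * D) * hcent'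

theorem distortion_P_split (hγ : γ.Nonempty) (m : ℝ) :
    distortion P γ = 3/100 * (∫ x in (0:ℝ)..1/3, minSqDist γ x)
      + 297/100 * ((∫ x in (2/3:ℝ)..m, minSqDist γ x) + ∫ x in m..1, minSqDist γ x) := by
  rw [distortion_P hγ, integral_minSqDist_split hγ (2/3) m 1]

theorem distortion_P_le_splitCost {δ : Finset ℝ} {m a b : ℝ} (hm : 2/3 ≤ m) (hm' : m ≤ 1)
    (hδ : δ.Nonempty) (hδγ : δ ⊆ γ) (ha : a ∈ γ) (hb : b ∈ γ) :
    distortion P γ ≤ splitCost m a b + 297/100 * ∫ x in m..1, minSqDist δ x := by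
  have h₁ := integral_minSqDist_le (a := 0) (b := 1/3) (by norm_num) ha
  have h₂ := integral_minSqDist_le hm hb
  have h₃ := intervalIntegral.integral_mono_on (μ := volume) hm'
    ((continuous_minSqDist ⟨a, ha⟩).intervalIntegrable _ _)
    ((continuous_minSqDist hδ).intervalIntegrable _ _) fun x _ => minSqDist_anti hδ hδγ x
  rw [distortion_P_split ⟨a, ha⟩ m, splitCost]
  linarith

theorem distortion_P_eq_splitCost {c₀ c₁ : ℝ} (hc₀ : c₀ ∈ γ) (hc₁ : c₁ ∈ γ.erase c₀)
    (h01 : c₀ ≤ c₁) (hrest : ∀ d ∈ γ.erase c₀, c₁ ≤ d) (hm : 2/3 ≤ (c₀ + c₁) / 2)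
    (hm' : (c₀ + c₁) / 2 ≤ 1) :
    distortion P γ = splitCost ((c₀ + c₁) / 2) c₀ c₀
      + 297/100 * ∫ x in (c₀ + c₁) / 2..1, minSqDist (γ.erase c₀) x := by
  have hleft : ∀ x, 2 * x ≤ c₀ + c₁ → minSqDist γ x = (x - c₀) ^ 2 :=
    fun x hx => minSqDist_eq_of_two_mul_le hc₀ h01 hrest hx
  have e₁ : ∫ x in (0:ℝ)..1/3, minSqDist γ x = ∫ x in (0:ℝ)..1/3, (x - c₀) ^ 2 :=
    intervalIntegral.integral_congr fun x hx => hleft x <| by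
      rw [uIcc_of_le (by norm_num)] at hx; linarith [hx.2]
  have e₂ : ∫ x in (2/3:ℝ)..(c₀ + c₁) / 2, minSqDist γ x =
      ∫ x in (2/3:ℝ)..(c₀ + c₁) / 2, (x - c₀) ^ 2 :=
    intervalIntegral.integral_congr fun x hx => hleft x <| by
      rw [uIcc_of_le hm] at hx; linarith [hx.2]
  have e₃ : ∫ x in (c₀ + c₁) / 2..1, minSqDist γ x =
      ∫ x in (c₀ + c₁) / 2..1, minSqDist (γ.erase c₀) x :=
    intervalIntegral.integral_congr fun x hx => minSqDist_eq_erase_of_le_two_mul hc₀ hc₁ h01 <| by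
      rw [uIcc_of_le hm'] at hx; linarith [hx.1]
  rw [distortion_P_split ⟨c₀, hc₀⟩ ((c₀ + c₁) / 2), e₁, e₂, e₃, splitCost]
  ring

theorem not_isOptimal_of_cell_straddles {c₀ c₁ : ℝ} (hc₀ : c₀ ∈ γ) (hc₁ : c₁ ∈ γ.erase c₀)
    (h01 : c₀ ≤ c₁) (hrest : ∀ d ∈ γ.erase c₀, c₁ ≤ d) (hc₀' : 1/3 < c₀) (hc₀'' : c₀ ≤ 2/3)
    (hm : 2/3 < (c₀ + c₁) / 2) (hm' : (c₀ + c₁) / 2 ≤ 1) : ¬IsOptimal P n γ := by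
  intro hγ
  have hswap : ∀ θ b, b ∈ insert θ (γ.erase c₀) → distortion P γ ≤
      splitCost ((c₀ + c₁) / 2) θ b
        + 297/100 * ∫ x in (c₀ + c₁) / 2..1, minSqDist (γ.erase c₀) x := fun θ b hb =>
    (hγ.distortion_le (Finset.insert_nonempty _ _)
      ((Finset.card_insert_erase_le hc₀).trans hγ.2.1)).trans
      (distortion_P_le_splitCost hm.le hm' ⟨c₁, hc₁⟩ (Finset.subset_insert _ _)
        (Finset.mem_insert_self _ _) hb)
  have hD := distortion_P_eq_splitCost hc₀ hc₁ h01 hrest hm.le hm'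
  have hcent := centroid_of_forall_splitCost_le fun θ => by
    linarith [hswap θ θ (Finset.mem_insert_self _ _)]
  have hgain := splitCost_one_sixth_lt hc₀' hc₀'' hm hcent
  rw [show 2 * ((c₀ + c₁) / 2) - c₀ = c₁ by ring] at hgain
  linarith [hswap (1/6) c₁ (Finset.mem_insert_of_mem hc₁)]

theorem IsOptimal.exists_le_one_third (hn : 3 ≤ n) (hγ : IsOptimal P n γ) :
    ∃ c ∈ γ, c ≤ 1/3 := by
  by_contra! h
  set c₀ := γ.min' hγ.1
  have hc₀ : c₀ ∈ γ := γ.min'_mem hγ.1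
  have hδ : (γ.erase c₀).Nonempty := by
    rw [← Finset.card_pos, Finset.card_erase_of_mem hc₀, hγ.card_eq]
    omega
  set c₁ := (γ.erase c₀).min' hδ
  have hc₁ : c₁ ∈ γ.erase c₀ := Finset.min'_mem _ hδ
  have h01 : c₀ ≤ c₁ := γ.min'_le _ (Finset.mem_of_mem_erase hc₁)
  have hrest : ∀ d ∈ γ.erase c₀, c₁ ≤ d := fun d hd => Finset.min'_le _ d hd
  have hc₀' : 1/3 < c₀ := h c₀ hc₀
  have hleft : ∀ x ∈ Icc (0:ℝ) (1/3), minSqDist γ x = (x - c₀) ^ 2 :=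
    fun x hx => minSqDist_eq_of_two_mul_le hc₀ h01 hrest (by linarith [hx.2])
  rcases le_or_gt (2/3) c₀ with h23 | h23
  · exact not_isOptimal_of_forall_two_thirds_le hn (fun d hd => h23.trans (γ.min'_le d hd)) hγ
  rcases le_or_gt ((c₀ + c₁) / 2) (2/3) with hm | hm
  · obtain ⟨x, hx, hlt⟩ := hγ.exists_lt_of_one_sixth_mem (by linarith) hleft
      (Finset.mem_insert_self (1/6) (γ.erase c₀)) ((Finset.card_insert_erase_le hc₀).trans hγ.2.1)
    rw [minSqDist_eq_erase_of_le_two_mul hc₀ hc₁ h01 (by linarith [hx.1])] at hlt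
    exact hlt.not_ge (minSqDist_anti hδ (Finset.subset_insert _ _) x)
  rcases le_or_gt 1 ((c₀ + c₁) / 2) with hm' | hm'
  · have hc₁γ := Finset.mem_of_mem_erase hc₁
    obtain ⟨x, hx, hlt⟩ := hγ.exists_lt_of_one_sixth_mem (by linarith) hleft
      (Finset.mem_insert_self (1/6) (γ.erase c₁)) ((Finset.card_insert_erase_le hc₁γ).trans hγ.2.1)
    rw [minSqDist_eq_of_two_mul_le hc₀ h01 hrest (by linarith [hx.2])] at hlt
    exact hlt.not_ge (minSqDist_le (Finset.mem_insert_of_mem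
      (Finset.mem_erase.2 ⟨(Finset.ne_of_mem_erase hc₁).symm, hc₀⟩)) x)
  · exact not_isOptimal_of_cell_straddles hc₀ hc₁ h01 hrest hc₀' h23.le hm hm'.le hγ

end P

theorem stmt9 (n : ℕ) (hn : 3 ≤ n) (γ : Finset ℝ)
    (hγ : IsOptimal (mix (1/100) (unif 0 (1/3)) (unif (2/3) 1)) n γ) :
    (∃ c ∈ γ, c ∈ Icc (0:ℝ) (1/3)) ∧ (∃ c ∈ γ, c ∈ Icc (2/3 : ℝ) 1) := by
  refine ⟨?_, hγ.exists_mem_Icc_two_thirds_one hn⟩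
  obtain ⟨c, hc, hc₃⟩ := hγ.exists_le_one_third hn
  rcases lt_or_ge c 0 with hc₀ | hc₀
  · exact ⟨0, hγ.zero_mem_of_neg hc hc₀, by norm_num⟩
  · exact ⟨c, hc, hc₀, hc₃⟩
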